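/- arXiv:1106.5177 — 3 statements merged into one kernel-verified Lean document; each statement's English description precedes it below -/
import Mathlib

section
/- Let A ∈ ℂ^{N×M} have unit-norm columns and let x be s-sparse with support {J_1,…,J_s} and x_max = max_j |x_J_j|. Let η > 0 and suppose |⟨a_i, a_j⟩| ≤ η for all distinct i, j ∈ supp(x). If b = Ax + e, then for J_max the index achieving |x_{J_max}| = x_max, one has |⟨b, a_{J_max}⟩| ≥ x_max − (s−1)η·x_max − ‖e‚‖₂. -/
/-!
Expanding `⟨b, a_J⟩` over the support splits it into the diagonal term `conj (x_J) ⟨a_J, a_J⟩`,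
of modulus `x_max` because `a_J` is a unit vector, the `s - 1` cross terms `conj (x_j) ⟨a_j, a_J⟩`,
each of modulus at most `η x_max` by incoherence and maximality of `|x_J|`, and the noise term
`⟨e, a_J⟩`, bounded by `‖e‖` by Cauchy–Schwarz. The reverse triangle inequality concludes.
-/

open Finset

section Incoherent

variable {𝕜 E ι : Type*} [RCLike 𝕜] [DecidableEq ι] [NormedAddCommGroup E] [InnerProductSpace 𝕜 E]
  {v : ι → E} {c : ι → 𝕜} {S : Finset ι} {k : ι} {η : ℝ}

lemma norm_sum_erase_inner_smul_le (hk : k ∈ S)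
    (hcoh : ∀ j ∈ S, j ≠ k → ‖(inner 𝕜 (v j) (v k) : 𝕜)‖ ≤ η)
    (hmax : ∀ j ∈ S, ‖c j‖ ≤ ‖c k‖) :
    ‖∑ j ∈ S.erase k, (inner 𝕜 (c j • v j) (v k) : 𝕜)‖ ≤ ((#S : ℝ) - 1) * η * ‖c k‖ := by
  have hterm : ∀ j ∈ S.erase k, ‖(inner 𝕜 (c j • v j) (v k) : 𝕜)‖ ≤ ‖c k‖ * η := by
    intro j hj
    rw [inner_smul_left, norm_mul, RCLike.norm_conj]
    exact mul_le_mul (hmax j (mem_of_mem_erase hj)) (hcoh j (mem_of_mem_erase hj)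
      (ne_of_mem_erase hj)) (norm_nonneg _) (norm_nonneg _)
  calc ‖∑ j ∈ S.erase k, (inner 𝕜 (c j • v j) (v k) : 𝕜)‖
      ≤ ∑ j ∈ S.erase k, ‖(inner 𝕜 (c j • v j) (v k) : 𝕜)‖ := norm_sum_le _ _
    _ ≤ #(S.erase k) • (‖c k‖ * η) := sum_le_card_nsmul _ _ _ hterm
    _ = ((#S : ℝ) - 1) * η * ‖c k‖ := by
      rw [card_erase_of_mem hk, nsmul_eq_mul, Nat.cast_pred (card_pos.2 ⟨k, hk⟩)]
      ring

lemma norm_inner_sum_smul_ge (hk : k ∈ S) (hvk : ‖v k‖ = 1)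
    (hcoh : ∀ j ∈ S, j ≠ k → ‖(inner 𝕜 (v j) (v k) : 𝕜)‖ ≤ η)
    (hmax : ∀ j ∈ S, ‖c j‖ ≤ ‖c k‖) :
    ‖c k‖ - ((#S : ℝ) - 1) * η * ‖c k‖ ≤ ‖(inner 𝕜 (∑ j ∈ S, c j • v j) (v k) : 𝕜)‖ := by
  have hdiag : ‖(inner 𝕜 (c k • v k) (v k) : 𝕜)‖ = ‖c k‖ := by
    rw [inner_smul_left, inner_self_eq_one_of_norm_eq_one hvk, mul_one, RCLike.norm_conj]
  rw [sum_inner, ← add_sum_erase _ _ hk]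
  linarith [norm_sub_le_norm_add (inner 𝕜 (c k • v k) (v k) : 𝕜)
    (∑ j ∈ S.erase k, (inner 𝕜 (c j • v j) (v k) : 𝕜)), norm_sum_erase_inner_smul_le hk hcoh hmax]

end Incoherent

theorem matched_filter_lower_bound_at_max_general
    {N M : ℕ} (a : Fin M → EuclideanSpace ℂ (Fin N))
    (ha : ∀ j, ‖a j‖ = 1)
    (x : Fin M → ℂ) (S : Finset (Fin M)) (s : ℕ)
    (hcard : S.card = s)
    (hsupp : ∀ j, x j ≠ 0 ↔ j ∈ S)
    (η : ℝ)
    (hband : ∀ i ∈ S, ∀ j ∈ S, i ≠ j → ‖(inner ℂ (a i) (a j) : ℂ)‖ ≤ η)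
    (e b : EuclideanSpace ℂ (Fin N))
    (hb : b = (∑ j, x j • a j) + e)
    (Jmax : Fin M) (hJmax : Jmax ∈ S)
    (hmax : ∀ j ∈ S, ‖x j‖ ≤ ‖x Jmax‖) :
    ‖(inner ℂ b (a Jmax) : ℂ)‖ ≥
      ‖x Jmax‖ - ((s : ℝ) - 1) * η * ‖x Jmax‖ - ‖e‖ := by
  have hsum : ∑ j, x j • a j = ∑ j ∈ S, x j • a j := by
    refine (sum_subset (subset_univ S) fun j _ hj => ?_).symm
    rw [not_ne_iff.mp (mt (hsupp j).mp hj), zero_smul]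
  have hsignal := norm_inner_sum_smul_ge hJmax (ha Jmax)
    (fun j hj hne => hband j hj Jmax hJmax hne) hmax
  have hnoise : ‖(inner ℂ e (a Jmax) : ℂ)‖ ≤ ‖e‖ := by
    simpa [ha Jmax] using norm_inner_le_norm (𝕜 := ℂ) e (a Jmax)
  rw [hb, hsum, inner_add_left, ← hcard]
  linarith [norm_sub_le_norm_add (inner ℂ (∑ j ∈ S, x j • a j) (a Jmax) : ℂ)
    (inner ℂ e (a Jmax) : ℂ)]

/-- Lower bound on the matched-filter output at the largest component. -/
theorem matched_filter_lower_bound_at_max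
    {N M : ℕ} (a : Fin M → EuclideanSpace ℂ (Fin N))
    (ha : ∀ j, ‖a j‖ = 1)
    (x : Fin M → ℂ) (S : Finset (Fin M)) (s : ℕ)
    (hcard : S.card = s)
    (hsupp : ∀ j, x j ≠ 0 ↔ j ∈ S)
    (η : ℝ) (hη : 0 < η)
    (hband : ∀ i ∈ S, ∀ j ∈ S, i ≠ j → ‖(inner ℂ (a i) (a j) : ℂ)‖ ≤ η)
    (e b : EuclideanSpace ℂ (Fin N))
    (hb : b = (∑ j, x j • a j) + e)
    (Jmax : Fin M) (hJmax : Jmax ∈ S)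
    (hmax : ∀ j ∈ S, ‖x j‖ ≤ ‖x Jmax‖) :
    ‖(inner ℂ b (a Jmax) : ℂ)‖ ≥
      ‖x Jmax‖ - ((s : ℝ) - 1) * η * ‖x Jmax‖ - ‖e‖ :=
  matched_filter_lower_bound_at_max_general a ha x S s hcard hsupp η hband e b hb Jmax hJmax hmax
end

section
/- Let A ∈ ℂ^{N×M} with unit-norm columns, x s-sparse, b = Ax + e, and η > 0. Define the η-coherence band B_η(k) = {i : |⟨a_i,a_k⟩| > η} and B_η(S) = ∪_{k∈S} B_η(k). Suppose |⟨a_i, a_j⟩| ≤ η for all distinct i, j ∈ supp(x), and suppose (2s−1)η + 2‖e‖₂/x_max < 1 where x_max = max over support of |x_j|. Then argmax_l |⟨b, a_l⟩| belongs to B_η(supp(x)) ∪ supp(x); in particular any index l maximizing |⟨b,a_l⟩| satisfies |⟨a_l, a_j⟩| > η for some j ∈ supp(x), or l ∈ supp(x). -/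
/-! Expand `⟪b, a k⟫ = ∑_{j ∈ S} conj (x j) ⟪a j, a k⟫ + ⟪e, a k⟫`. An atom `a l` incoherent with the
whole support picks up at most `s η x_max + ‖e‖`, while an atom `a j₀` with `|x j₀| = x_max` picks up
its own coefficient against at most `s - 1` cross terms, i.e. at least
`x_max - (s - 1) η x_max - ‖e‖`. The hypothesis `(2s - 1) η + 2‖e‖ / x_max < 1` says exactly that the
second bound beats the first, so `a l` cannot be the maximizer. -/

open Finset

section Incoherence

variable {𝕜 E ι : Type*} [RCLike 𝕜] [NormedAddCommGroup E] [InnerProductSpace 𝕜 E]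

local notation "⟪" u ", " v "⟫" => inner 𝕜 u v

theorem norm_inner_sum_smul_le {a : ι → E} {x : ι → 𝕜} {S : Finset ι} {v : E} {c η : ℝ}
    (hx : ∀ j ∈ S, ‖x j‖ ≤ c) (hv : ∀ j ∈ S, ‖⟪a j, v⟫‖ ≤ η) :
    ‖⟪∑ j ∈ S, x j • a j, v⟫‖ ≤ #S * (c * η) := by
  rw [sum_inner, ← nsmul_eq_mul]
  refine (norm_sum_le _ _).trans (sum_le_card_nsmul _ _ _ fun j hj => ?_)
  rw [inner_smul_left, norm_mul, RCLike.norm_conj]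
  exact mul_le_mul (hx j hj) (hv j hj) (norm_nonneg _) ((norm_nonneg _).trans (hx j hj))

theorem norm_inner_sum_smul_add_le {a : ι → E} {x : ι → 𝕜} {S : Finset ι} {e v : E} {c η : ℝ}
    (hv : ‖v‖ = 1) (hx : ∀ j ∈ S, ‖x j‖ ≤ c) (hav : ∀ j ∈ S, ‖⟪a j, v⟫‖ ≤ η) :
    ‖⟪∑ j ∈ S, x j • a j + e, v⟫‖ ≤ #S * (c * η) + ‖e‖ := by
  rw [inner_add_left]
  refine (norm_add_le _ _).trans (add_le_add (norm_inner_sum_smul_le hx hav) ?_)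
  simpa [hv] using norm_inner_le_norm (𝕜 := 𝕜) e v

theorem le_norm_inner_sum_smul_add_self [DecidableEq ι] {a : ι → E} {x : ι → 𝕜} {S : Finset ι} {e : E}
    {c η : ℝ} {k : ι} (hk : k ∈ S) (hak : ‖a k‖ = 1) (hx : ∀ j ∈ S, ‖x j‖ ≤ c)
    (hS : ∀ j ∈ S, j ≠ k → ‖⟪a j, a k⟫‖ ≤ η) :
    ‖x k‖ - (#S - 1) * (c * η) - ‖e‖ ≤ ‖⟪∑ j ∈ S, x j • a j + e, a k⟫‖ := by
  have hself : ‖⟪x k • a k, a k⟫‖ = ‖x k‖ := by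
    rw [inner_smul_left, inner_self_eq_norm_sq_to_K, hak]
    simp
  have hcross : ‖⟪∑ j ∈ S.erase k, x j • a j + e, a k⟫‖ ≤ (#S - 1) * (c * η) + ‖e‖ := by
    rw [← cast_card_erase_of_mem hk]
    exact norm_inner_sum_smul_add_le hak (fun j hj => hx j (mem_of_mem_erase hj))
      fun j hj => hS j (mem_of_mem_erase hj) (ne_of_mem_erase hj)
  have hsplit : ⟪∑ j ∈ S, x j • a j + e, a k⟫
      = ⟪x k • a k, a k⟫ + ⟪∑ j ∈ S.erase k, x j • a j + e, a k⟫ := by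
    rw [← add_sum_erase S _ hk, add_assoc, inner_add_left]
  have := norm_sub_norm_le (⟪x k • a k, a k⟫) (-⟪∑ j ∈ S.erase k, x j • a j + e, a k⟫)
  rw [norm_neg, sub_neg_eq_add, ← hsplit, hself] at this
  linarith

theorem norm_inner_lt_of_incoherent {a : ι → E} {x : ι → 𝕜} {S : Finset ι} {e : E} {c η : ℝ}
    {k l : ι} (ha : ∀ j, ‖a j‖ = 1) (hk : k ∈ S) (hxk : ‖x k‖ = c) (hx : ∀ j ∈ S, ‖x j‖ ≤ c)
    (hS : ∀ i ∈ S, ∀ j ∈ S, i ≠ j → ‖⟪a i, a j⟫‖ ≤ η) (hl : ∀ j ∈ S, ‖⟪a j, a l⟫‖ ≤ η)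
    (hcond : (2 * #S - 1) * η * c + 2 * ‖e‖ < c) :
    ‖⟪∑ j ∈ S, x j • a j + e, a l⟫‖ < ‖⟪∑ j ∈ S, x j • a j + e, a k⟫‖ := by
  classical
  have hup := norm_inner_sum_smul_add_le (e := e) (ha l) hx hl
  have hlow := le_norm_inner_sum_smul_add_self (e := e) hk (ha k) hx fun j hj hjk => hS j hj k hk hjk
  rw [hxk] at hlow
  linarith

end Incoherence

theorem bomp_base_case_general
    {N M : ℕ} (a : Fin M → EuclideanSpace ℂ (Fin N))
    (ha : ∀ j, ‖a j‖ = 1)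
    (x : Fin M → ℂ) (S : Finset (Fin M)) (s : ℕ)
    (hcard : S.card = s)
    (hsupp : ∀ j, x j ≠ 0 ↔ j ∈ S)
    (e b : EuclideanSpace ℂ (Fin N))
    (hb : b = (∑ j, x j • a j) + e)
    (η : ℝ)
    (hband : ∀ i ∈ S, ∀ j ∈ S, i ≠ j → ‖(inner ℂ (a i) (a j) : ℂ)‖ ≤ η)
    (xmax : ℝ) (hxmaxpos : 0 < xmax)
    (hxmax : ∀ j ∈ S, ‖x j‖ ≤ xmax)
    (hxmax_att : ∃ j ∈ S, ‖x j‖ = xmax)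
    (hcond : (2 * (s : ℝ) - 1) * η + 2 * ‖e‖ / xmax < 1) :
    ∀ l : Fin M, (∀ j : Fin M, ‖(inner ℂ b (a j) : ℂ)‖ ≤ ‖(inner ℂ b (a l) : ℂ)‖) →
      (∃ j ∈ S, η < ‖(inner ℂ (a l) (a j) : ℂ)‖) ∨ l ∈ S := by
  intro l hmax
  by_contra! ⟨hfar, -⟩
  obtain ⟨k, hk, hxk⟩ := hxmax_att
  have hb_supp : b = ∑ j ∈ S, x j • a j + e := by
    rw [hb, ← sum_subset (subset_univ S) fun j _ hj => by
      rw [not_ne_iff.mp (mt (hsupp j).mp hj), zero_smul]]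
  have hcond' : (2 * #S - 1) * η * xmax + 2 * ‖e‖ < xmax := by
    have := mul_lt_mul_of_pos_right hcond hxmaxpos
    rwa [add_mul, div_mul_cancel₀ _ hxmaxpos.ne', one_mul, ← hcard] at this
  subst hb_supp
  exact (hmax k).not_gt <| norm_inner_lt_of_incoherent ha hk hxk hxmax hband
    (fun j hj => (norm_inner_symm _ _).trans_le (hfar j hj)) hcond'

/-- Base case of the BOMP guarantee: the maximizer of |⟨b, a_l⟩| lies in the
η-coherence band of supp(x) or in supp(x) itself. -/
theorem bomp_base_case
    {N M : ℕ} (a : Fin M → EuclideanSpace ℂ (Fin N))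
    (ha : ∀ j, ‖a j‖ = 1)
    (x : Fin M → ℂ) (S : Finset (Fin M)) (s : ℕ)
    (hcard : S.card = s)
    (hsupp : ∀ j, x j ≠ 0 ↔ j ∈ S)
    (e b : EuclideanSpace ℂ (Fin N))
    (hb : b = (∑ j, x j • a j) + e)
    (η : ℝ) (hη : 0 < η)
    (hband : ∀ i ∈ S, ∀ j ∈ S, i ≠ j → ‖(inner ℂ (a i) (a j) : ℂ)‖ ≤ η)
    (xmax : ℝ) (hxmaxpos : 0 < xmax)
    (hxmax : ∀ j ∈ S, ‖x j‖ ≤ xmax)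
    (hxmax_att : ∃ j ∈ S, ‖x j‖ = xmax)
    (hcond : (2 * (s : ℝ) - 1) * η + 2 * ‖e‖ / xmax < 1) :
    ∀ l : Fin M, (∀ j : Fin M, ‖(inner ℂ b (a j) : ℂ)‖ ≤ ‖(inner ℂ b (a l) : ℂ)‖) →
      (∃ j ∈ S, η < ‖(inner ℂ (a l) (a j) : ℂ)‖) ∨ l ∈ S :=
  bomp_base_case_general a ha x S s hcard hsupp e b hb η hband xmax hxmaxpos hxmax hxmax_att hcond
end

section
/- For k ∈ supp(x) with b = Ax + e, unit-norm columns, and |⟨a_i,a_j⟩| ≤ η for distinct support indices i, j: |⟨b, a_k⟩| ≥ x_min − (s−1)·η·x_max − ‖e‖₂. -/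
/-!
Since `‖a k‖ = 1`, the matched filter output splits as
`⟪b, a k⟫ = conj (x k) + ∑_{j ∈ S, j ≠ k} conj (x j) ⟪a j, a k⟫ + ⟪e, a k⟫`.
The reverse triangle inequality then leaves the signal term `‖x k‖ ≥ xmin`, minus at most
`s - 1` cross terms of size `≤ xmax η` each, minus the noise term `≤ ‖e‖` (Cauchy–Schwarz).
-/

open Finset ComplexConjugate

section
variable {𝕜 E ι : Type*} [RCLike 𝕜] [NormedAddCommGroup E] [InnerProductSpace 𝕜 E] [DecidableEq ι]

theorem inner_sum_smul_eq_conj_add_sum_erase {v : ι → E} (c : ι → 𝕜) {S : Finset ι} {k : ι}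
    (hk : k ∈ S) (hvk : ‖v k‖ = 1) :
    inner 𝕜 (∑ j ∈ S, c j • v j) (v k)
      = conj (c k) + ∑ j ∈ S.erase k, conj (c j) * inner 𝕜 (v j) (v k) := by
  simp only [sum_inner, inner_smul_left]
  rw [← add_sum_erase S _ hk, inner_self_eq_norm_sq_to_K, hvk]
  simp

theorem norm_sub_sum_erase_sub_norm_le_norm_inner {v : ι → E} (c : ι → 𝕜) (e : E)
    {S : Finset ι} {k : ι} (hk : k ∈ S) (hvk : ‖v k‖ = 1) :
    ‖c k‖ - ∑ j ∈ S.erase k, ‖c j‖ * ‖inner 𝕜 (v j) (v k)‖ - ‖e‖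
      ≤ ‖inner 𝕜 (∑ j ∈ S, c j • v j + e) (v k)‖ := by
  set cross := ∑ j ∈ S.erase k, conj (c j) * inner 𝕜 (v j) (v k)
  have hcross : ‖cross‖ ≤ ∑ j ∈ S.erase k, ‖c j‖ * ‖inner 𝕜 (v j) (v k)‖ :=
    (norm_sum_le _ _).trans_eq (by simp only [norm_mul, RCLike.norm_conj])
  have hnoise : ‖inner 𝕜 e (v k)‖ ≤ ‖e‖ :=
    (norm_inner_le_norm e (v k)).trans_eq (by rw [hvk, mul_one])
  have htri₁ := norm_le_add_norm_add (conj (c k)) cross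
  have htri₂ := norm_le_add_norm_add (conj (c k) + cross) (inner 𝕜 e (v k))
  rw [RCLike.norm_conj] at htri₁
  rw [inner_add_left, inner_sum_smul_eq_conj_add_sum_erase c hk hvk]
  linarith
end

theorem sum_erase_le_card_sub_one_mul {ι : Type*} [DecidableEq ι] {S : Finset ι} {k : ι}
    (hk : k ∈ S) {f : ι → ℝ} {B : ℝ} (hf : ∀ j ∈ S.erase k, f j ≤ B) :
    ∑ j ∈ S.erase k, f j ≤ (#S - 1 : ℝ) * B := by
  have := sum_le_card_nsmul _ _ _ hf
  rwa [card_erase_of_mem hk, nsmul_eq_mul, Nat.cast_pred (card_pos.mpr ⟨k, hk⟩)] at this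

theorem matched_filter_lower_bound_on_support_general
    {N M : ℕ} (a : Fin M → EuclideanSpace ℂ (Fin N))
    (ha : ∀ j, ‖a j‖ = 1)
    (x : Fin M → ℂ) (S : Finset (Fin M)) (s : ℕ)
    (hcard : S.card = s)
    (hsupp : ∀ j, x j ≠ 0 ↔ j ∈ S)
    (e b : EuclideanSpace ℂ (Fin N))
    (hb : b = (∑ j, x j • a j) + e)
    (η : ℝ)
    (hband : ∀ i ∈ S, ∀ j ∈ S, i ≠ j → ‖(inner ℂ (a i) (a j) : ℂ)‖ ≤ η)
    (xmin xmax : ℝ)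
    (hxminle : ∀ j ∈ S, xmin ≤ ‖x j‖)
    (hxmaxle : ∀ j ∈ S, ‖x j‖ ≤ xmax) :
    ∀ k ∈ S, ‖(inner ℂ b (a k) : ℂ)‖ ≥ xmin - ((s : ℝ) - 1) * η * xmax - ‖e‖ := by
  intro k hk
  have hsum : ∑ j, x j • a j = ∑ j ∈ S, x j • a j :=
    (sum_subset (subset_univ S) fun j _ hj => by
      rw [not_ne_iff.mp (mt (hsupp j).mp hj), zero_smul]).symm
  have hcross : ∑ j ∈ S.erase k, ‖x j‖ * ‖inner ℂ (a j) (a k)‖ ≤ ((s : ℝ) - 1) * (xmax * η) := by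
    rw [← hcard]
    refine sum_erase_le_card_sub_one_mul hk fun j hj => ?_
    have hjS := mem_of_mem_erase hj
    exact mul_le_mul (hxmaxle j hjS) (hband j hjS k hk (ne_of_mem_erase hj)) (norm_nonneg _)
      ((norm_nonneg _).trans (hxmaxle k hk))
  have := norm_sub_sum_erase_sub_norm_le_norm_inner x e hk (ha k)
  rw [hb, hsum]
  linarith [hxminle k hk]

/-- Lower bound for the matched-filter output at a true support index. -/
theorem matched_filter_lower_bound_on_support
    {N M : ℕ} (a : Fin M → EuclideanSpace ℂ (Fin N))
    (ha : ∀ j, ‖a j‖ = 1)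
    (x : Fin M → ℂ) (S : Finset (Fin M)) (s : ℕ)
    (hcard : S.card = s)
    (hsupp : ∀ j, x j ≠ 0 ↔ j ∈ S)
    (e b : EuclideanSpace ℂ (Fin N))
    (hb : b = (∑ j, x j • a j) + e)
    (η : ℝ) (hη : 0 < η)
    (hband : ∀ i ∈ S, ∀ j ∈ S, i ≠ j → ‖(inner ℂ (a i) (a j) : ℂ)‖ ≤ η)
    (xmin xmax : ℝ)
    (hxminle : ∀ j ∈ S, xmin ≤ ‖x j‖)
    (hxmaxle : ∀ j ∈ S, ‖x j‖ ≤ xmax) :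
    ∀ k ∈ S, ‖(inner ℂ b (a k) : ℂ)‖ ≥ xmin - ((s : ℝ) - 1) * η * xmax - ‖e‖ :=
  matched_filter_lower_bound_on_support_general a ha x S s hcard hsupp e b hb η hband xmin xmax
    hxminle hxmaxle
end
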